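/- For BD△ formulas φ, χ: φ ⊨_{BD△} χ if and only if the formula φ ⇛ χ := ⋁_{x ≤₄ x'} (x(φ) ∧ x'(χ)) is valid, i.e. |φ ⇛ χ|⁺ = W in every BD△ model, where x, x' range over {t,b,n,f}, the four value-detecting formulas, and ≤₄ is the order f ≤₄ b ≤₄ t, f ≤₄ n ≤₄ t with b, n incomparable. -/
import Mathlib


inductive BDForm : Type
  | var : ℕ → BDForm
  | neg : BDForm → BDForm
  | and : BDForm → BDForm → BDForm
  | or : BDForm → BDForm → BDForm
  | delta : BDForm → BDForm
deriving DecidableEq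

structure BDModel where
  W : Type
  vp : ℕ → W → Prop
  vm : ℕ → W → Prop

def BDModel.sat (M : BDModel) : Bool → BDForm → M.W → Prop
  | true, .var p, w => M.vp p w
  | false, .var p, w => M.vm p w
  | b, .neg φ, w => M.sat (!b) φ w
  | true, .and φ ψ, w => M.sat true φ w ∧ M.sat true ψ w
  | false, .and φ ψ, w => M.sat false φ w ∨ M.sat false ψ w
  | true, .or φ ψ, w => M.sat true φ w ∨ M.sat true ψ w
  | false, .or φ ψ, w => M.sat false φ w ∧ M.sat false ψ w
  | true, .delta φ, w => M.sat true φ w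
  | false, .delta φ, w => ¬ M.sat true φ w

/-- BD△ entailment: positive extension inclusion and reverse negative inclusion, in every model. -/
def Entails (φ χ : BDForm) : Prop :=
  ∀ (M : BDModel) (w : M.W),
    (M.sat true φ w → M.sat true χ w) ∧ (M.sat false χ w → M.sat false φ w)

/-- the value-detecting formulas -/
def tF (φ : BDForm) : BDForm := (φ.delta).and ((φ.neg.delta).neg)
def bF (φ : BDForm) : BDForm := (φ.delta).and (φ.neg.delta)
def nF (φ : BDForm) : BDForm := ((φ.delta).neg).and ((φ.neg.delta).neg)
def fF (φ : BDForm) : BDForm := ((φ.delta).neg).and (φ.neg.delta)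

def topF : BDForm := ((BDForm.var 0).delta).or (((BDForm.var 0).delta).neg)
def botF : BDForm := topF.neg
noncomputable def gneg (a : ℝ) : ℝ := if a = 0 then 1 else 0
noncomputable def gdelta (a : ℝ) : ℝ := if a = 1 then 1 else 0
noncomputable def gimp (a b : ℝ) : ℝ := if a ≤ b then 1 else b
noncomputable def gcoimp (a b : ℝ) : ℝ := if a ≤ b then 0 else a

/-- the internalisation φ ⇛ χ of BD△ entailment:
⋁_{x ≤₄ x'} (x(φ) ∧ x'(χ)) with f ≤₄ b,n ≤₄ t -/
def Rr (φ χ : BDForm) : BDForm :=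
  ((fF φ).and ((fF χ).or ((bF χ).or ((nF χ).or (tF χ))))).or
    (((bF φ).and ((bF χ).or (tF χ))).or
      (((nF φ).and ((nF χ).or (tF χ))).or
        ((tF φ).and (tF χ))))

set_option maxHeartbeats 1000000 in
/-- φ ⊨_{BD△} χ iff the internalised entailment formula φ ⇛ χ is
positively satisfied at every world of every BD△ model. -/
theorem stmt19 (φ χ : BDForm) :
    Entails φ χ ↔ ∀ (M : BDModel) (w : M.W), M.sat true (Rr φ χ) w := by
  have key : ∀ (M : BDModel) (w : M.W),
      M.sat true (Rr φ χ) w ↔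
        ((M.sat true φ w → M.sat true χ w) ∧ (M.sat false χ w → M.sat false φ w)) := by
    intro M w
    simp only [Rr, fF, bF, nF, tF, BDModel.sat, Bool.not_true, Bool.not_false]
    set P := M.sat true φ w
    set Q := M.sat false φ w
    set R := M.sat true χ w
    set S := M.sat false χ w
    tauto
  constructor
  · intro h M w; exact (key M w).2 (h M w)
  · intro h M w; exact (key M w).1 (h M w)
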